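/- Let 1 < p < ∞ and let ω satisfy the dyadic reverse Carleson condition of order min{1, 2/p} with constant C. Then for any two finite families Λ₁, Λ₂ of dyadic intervals with card(Λ₁) ≤ card(Λ₂), one has ‖∑_{I∈Λ₁} H_I/‖H_I‖_{p,ω}‖_{X^p(ω)} ≤ C²·‖∑_{I∈Λ₂} H_I/‖H_I‖_{p,ω}‖_{X^p(ω)}, i.e., the normalized Haar basis is democratic in X^p(ω) with constant C². -/

import Mathlib

/-! At a point `x`, the intervals of `Λ` containing `x` are ancestors of the smallest one, `J`.
The reverse Carleson condition holds at every order above `min{1, 2/p}`, so the sums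
`∑_{x∈I∈Λ} ω(I)^{-2/p}` and `∑_{x∈I∈Λ} ω(I)^{-1}` are both comparable to their terms at `J`;
hence `(∑ ω(I)^{-2/p})^{p/2}` and `∑ ω(I)^{-1}` are pointwise comparable, with constants `C^{p/2}`
and `C`. As `∫ (∑_{I∈Λ} ω(I)^{-1} χ_I) ω = card Λ`, the `p`-th power of the norm of `Λ` lies
between `card Λ / C` and `C^{p/2} card Λ`, and `C^{1/2 + 1/p} ≤ C^2` because `C ≥ 1`. -/

open MeasureTheory Set

noncomputable def dyadicI (n k : ℕ) : Set ℝ := Set.Ico ((k : ℝ) / 2 ^ n) (((k : ℝ) + 1) / 2 ^ n)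

def IsDyadic (I : ℕ × ℕ) : Prop := I.2 < 2 ^ I.1

noncomputable def wInt (w : ℝ → ℝ) (I : ℕ × ℕ) : ℝ := ∫ x in dyadicI I.1 I.2, w x

def ancestors (J : ℕ × ℕ) : Set (ℕ × ℕ) :=
  {I | IsDyadic I ∧ dyadicI J.1 J.2 ⊆ dyadicI I.1 I.2}

noncomputable def XnormOne (w : ℝ → ℝ) (p : ℝ) (Λ : Finset (ℕ × ℕ)) : ℝ :=
  (∫ x in Set.Ico (0 : ℝ) 1,
      (∑ I ∈ Λ, Set.indicator (dyadicI I.1 I.2) (fun _ => (wInt w I) ^ (-(2 / p))) x) ^ (p / 2)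
        * w x) ^ (1 / p)

def ReverseCarleson (v : ℕ × ℕ → ℝ) (α C : ℝ) : Prop :=
  ∀ J, IsDyadic J → ∑' I : ancestors J, v I ^ (-α) ≤ C * v J ^ (-α)

/-- With `v = wInt w` and `β = 2 / p`, this is the square of the square function of
`∑ I ∈ Λ, H_I / ‖H_I‖_{p,w}`. -/
noncomputable def dyadicSum (v : ℕ × ℕ → ℝ) (β : ℝ) (Λ : Finset (ℕ × ℕ)) (x : ℝ) : ℝ :=
  ∑ I ∈ Λ, (dyadicI I.1 I.2).indicator (fun _ => v I ^ (-β)) x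

lemma measurableSet_dyadicI (n k : ℕ) : MeasurableSet (dyadicI n k) := measurableSet_Ico

lemma mem_dyadicI_iff {n k : ℕ} {x : ℝ} : x ∈ dyadicI n k ↔ 0 ≤ x ∧ ⌊x * 2 ^ n⌋₊ = k := by
  have h2 : (0 : ℝ) < 2 ^ n := by positivity
  rw [dyadicI, mem_Ico, div_le_iff₀ h2, lt_div_iff₀ h2]
  constructor
  · rintro ⟨hk, hk1⟩
    have hx : 0 ≤ x * 2 ^ n := (Nat.cast_nonneg k).trans hk
    exact ⟨nonneg_of_mul_nonneg_left hx h2, (Nat.floor_eq_iff hx).2 ⟨hk, hk1⟩⟩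
  · rintro ⟨hx, hk⟩
    exact (Nat.floor_eq_iff (by positivity)).1 hk

lemma floor_mul_two_pow_eq_div {x : ℝ} (n m : ℕ) :
    ⌊x * 2 ^ n⌋₊ = ⌊x * 2 ^ (n + m)⌋₊ / 2 ^ m := by
  rw [← Nat.floor_div_natCast]
  congr 1
  push_cast
  rw [pow_add, ← mul_assoc, mul_div_cancel_right₀ _ (by positivity)]

lemma dyadicI_subset_of_mem {n k n' k' : ℕ} {x : ℝ} (hn : n ≤ n') (hx : x ∈ dyadicI n k)
    (hx' : x ∈ dyadicI n' k') : dyadicI n' k' ⊆ dyadicI n k := by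
  obtain ⟨m, rfl⟩ := Nat.exists_eq_add_of_le hn
  intro y hy
  rw [mem_dyadicI_iff] at hx hx' hy ⊢
  rw [floor_mul_two_pow_eq_div n m, hy.2, ← hx'.2, ← floor_mul_two_pow_eq_div, hx.2]
  exact ⟨hy.1, rfl⟩

lemma dyadicI_subset_unit {I : ℕ × ℕ} (hI : IsDyadic I) : dyadicI I.1 I.2 ⊆ Ico 0 1 := by
  intro y hy
  rw [mem_dyadicI_iff] at hy
  have hfloor := floor_mul_two_pow_eq_div (x := y) 0 I.1
  rw [zero_add, hy.2, Nat.div_eq_of_lt hI, pow_zero, mul_one] at hfloor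
  exact ⟨hy.1, Nat.floor_eq_zero.1 hfloor⟩

lemma volume_dyadicI (n k : ℕ) : volume (dyadicI n k) = ENNReal.ofReal (2 ^ n)⁻¹ := by
  rw [dyadicI, Real.volume_Ico]
  congr 1
  ring

lemma level_le_of_mem_ancestors {I J : ℕ × ℕ} (h : I ∈ ancestors J) : I.1 ≤ J.1 := by
  have hvol := measure_mono (μ := volume) h.2
  rw [volume_dyadicI, volume_dyadicI, ENNReal.ofReal_le_ofReal_iff (by positivity),
    inv_le_inv₀ (by positivity) (by positivity)] at hvol
  exact (pow_le_pow_iff_right₀ one_lt_two).1 hvol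

lemma finite_ancestors (J : ℕ × ℕ) : (ancestors J).Finite := by
  refine ((finite_Iic J.1).prod (finite_Iio (2 ^ J.1))).subset fun I hI => ?_
  have hle := level_le_of_mem_ancestors hI
  exact ⟨hle, hI.1.trans_le (Nat.pow_le_pow_right two_pos hle)⟩

lemma exists_forall_mem_ancestors {T : Finset (ℕ × ℕ)} (hT : T.Nonempty)
    (hdy : ∀ I ∈ T, IsDyadic I) {x : ℝ} (hx : ∀ I ∈ T, x ∈ dyadicI I.1 I.2) :
    ∃ J ∈ T, ∀ I ∈ T, I ∈ ancestors J := by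
  obtain ⟨J, hJ, hmax⟩ := T.exists_max_image Prod.fst hT
  exact ⟨J, hJ, fun I hI => ⟨hdy I hI, dyadicI_subset_of_mem (hmax I hI) (hx I hI) (hx J hJ)⟩⟩

section ReverseCarleson

variable {v : ℕ × ℕ → ℝ} {α C : ℝ}

lemma ReverseCarleson.sum_le (h : ReverseCarleson v α C) (hpos : ∀ I, IsDyadic I → 0 < v I)
    {J : ℕ × ℕ} (hJ : IsDyadic J) {S : Finset (ℕ × ℕ)} (hS : ∀ I ∈ S, I ∈ ancestors J) :
    ∑ I ∈ S, v I ^ (-α) ≤ C * v J ^ (-α) := by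
  set f := fun I => v I ^ (-α)
  calc ∑ I ∈ S, f I = ∑ I ∈ S, (ancestors J).indicator f I :=
        Finset.sum_congr rfl fun I hI => (indicator_of_mem (hS I hI) f).symm
    _ ≤ ∑' I, (ancestors J).indicator f I :=
        Summable.sum_le_tsum S
          (fun I _ => indicator_nonneg (fun I hI => (Real.rpow_pos_of_pos (hpos I hI.1) _).le) I)
          (summable_of_hasFiniteSupport ((finite_ancestors J).subset support_indicator_subset))
    _ = ∑' I : ancestors J, f I := (tsum_subtype _ f).symm
    _ ≤ C * f J := h J hJ

lemma ReverseCarleson.mono (h : ReverseCarleson v α C) (hpos : ∀ I, IsDyadic I → 0 < v I)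
    (hmono : ∀ ⦃I J⦄, I ∈ ancestors J → v J ≤ v I) {β : ℝ} (hαβ : α ≤ β) :
    ReverseCarleson v β C := by
  intro J hJ
  have := (finite_ancestors J).to_subtype
  have hJpos := hpos J hJ
  have hterm : ∀ I : ancestors J, v I ^ (-β) ≤ v I ^ (-α) * v J ^ (α - β) := by
    rintro ⟨I, hI⟩
    have hIpos := hpos I hI.1
    calc v I ^ (-β) = v I ^ (-α) * v I ^ (α - β) := by rw [← Real.rpow_add hIpos]; ring_nf
      _ ≤ v I ^ (-α) * v J ^ (α - β) := by
        have hle := Real.rpow_le_rpow_of_nonpos hJpos (hmono hI) (by linarith : α - β ≤ 0)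
        exact mul_le_mul_of_nonneg_left hle (by positivity)
  calc ∑' I : ancestors J, v I ^ (-β)
      ≤ ∑' I : ancestors J, v I ^ (-α) * v J ^ (α - β) :=
        Summable.tsum_le_tsum hterm .of_finite .of_finite
    _ = (∑' I : ancestors J, v I ^ (-α)) * v J ^ (α - β) := tsum_mul_right
    _ ≤ C * v J ^ (-α) * v J ^ (α - β) := by gcongr; exact h J hJ
    _ = C * v J ^ (-β) := by rw [mul_assoc, ← Real.rpow_add hJpos]; ring_nf

lemma ReverseCarleson.one_le (h : ReverseCarleson v α C) (hpos : ∀ I, IsDyadic I → 0 < v I) :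
    1 ≤ C := by
  have h0 : IsDyadic (0, 0) := Nat.one_pos
  have h00 := h.sum_le hpos h0 (S := {(0, 0)}) (by simpa using ⟨h0, subset_rfl⟩)
  rw [Finset.sum_singleton] at h00
  exact (le_mul_iff_one_le_left (Real.rpow_pos_of_pos (hpos _ h0) _)).1 h00

lemma dyadicSum_nonneg (hpos : ∀ I, IsDyadic I → 0 < v I) (β : ℝ) {Λ : Finset (ℕ × ℕ)}
    (hΛ : ∀ I ∈ Λ, IsDyadic I) (x : ℝ) : 0 ≤ dyadicSum v β Λ x :=
  Finset.sum_nonneg fun I hI =>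
    indicator_nonneg (fun _ _ => (Real.rpow_pos_of_pos (hpos I (hΛ I hI)) _).le) x

lemma dyadicSum_le_mul_rpow {β γ : ℝ} (h : ReverseCarleson v β C)
    (hpos : ∀ I, IsDyadic I → 0 < v I) (hβ : 0 ≤ β) (hγ : 0 < γ) {Λ : Finset (ℕ × ℕ)}
    (hΛ : ∀ I ∈ Λ, IsDyadic I) (x : ℝ) :
    dyadicSum v β Λ x ≤ C * dyadicSum v γ Λ x ^ (β / γ) := by
  classical
  have hC := h.one_le hpos
  set T := Λ.filter fun I => x ∈ dyadicI I.1 I.2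
  have hsum : ∀ δ, dyadicSum v δ Λ x = ∑ I ∈ T, v I ^ (-δ) := fun δ => by
    rw [Finset.sum_filter]; rfl
  have hTdy : ∀ I ∈ T, IsDyadic I := fun I hI => hΛ I (Finset.mem_filter.1 hI).1
  rcases T.eq_empty_or_nonempty with hT | hT
  · rw [hsum, hsum, hT, Finset.sum_empty, Finset.sum_empty]
    exact mul_nonneg (by linarith) (Real.rpow_nonneg le_rfl _)
  obtain ⟨J, hJT, hanc⟩ :=
    exists_forall_mem_ancestors hT hTdy fun I hI => (Finset.mem_filter.1 hI).2
  have hJpos := hpos J (hTdy J hJT)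
  calc dyadicSum v β Λ x ≤ C * v J ^ (-β) := by
        rw [hsum]; exact h.sum_le hpos (hTdy J hJT) hanc
    _ = C * (v J ^ (-γ)) ^ (β / γ) := by rw [← Real.rpow_mul hJpos.le]; field_simp
    _ ≤ C * dyadicSum v γ Λ x ^ (β / γ) := by
        rw [hsum]
        gcongr
        exact Finset.single_le_sum
          (fun I hI => (Real.rpow_pos_of_pos (hpos I (hTdy I hI)) _).le) hJT

lemma dyadicSum_rpow_le {p : ℝ} (h : ReverseCarleson v (min 1 (2 / p)) C)
    (hpos : ∀ I, IsDyadic I → 0 < v I) (hmono : ∀ ⦃I J⦄, I ∈ ancestors J → v J ≤ v I)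
    (hp : 0 < p) {Λ : Finset (ℕ × ℕ)} (hΛ : ∀ I ∈ Λ, IsDyadic I) (x : ℝ) :
    dyadicSum v (2 / p) Λ x ^ (p / 2) ≤ C ^ (p / 2) * dyadicSum v 1 Λ x := by
  have hC := h.one_le hpos
  have hS := dyadicSum_nonneg hpos 1 hΛ x
  have hle := dyadicSum_le_mul_rpow (h.mono hpos hmono (min_le_right _ _)) hpos (by positivity)
    one_pos hΛ x
  calc dyadicSum v (2 / p) Λ x ^ (p / 2) ≤ (C * dyadicSum v 1 Λ x ^ (2 / p / 1)) ^ (p / 2) := by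
        gcongr
        exact dyadicSum_nonneg hpos _ hΛ x
    _ = C ^ (p / 2) * dyadicSum v 1 Λ x := by
        rw [Real.mul_rpow (by positivity) (by positivity), ← Real.rpow_mul hS]
        field_simp
        rw [Real.rpow_one]

lemma dyadicSum_one_le {p : ℝ} (h : ReverseCarleson v (min 1 (2 / p)) C)
    (hpos : ∀ I, IsDyadic I → 0 < v I) (hmono : ∀ ⦃I J⦄, I ∈ ancestors J → v J ≤ v I)
    (hp : 0 < p) {Λ : Finset (ℕ × ℕ)} (hΛ : ∀ I ∈ Λ, IsDyadic I) (x : ℝ) :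
    dyadicSum v 1 Λ x ≤ C * dyadicSum v (2 / p) Λ x ^ (p / 2) := by
  simpa only [one_div_div] using dyadicSum_le_mul_rpow (γ := 2 / p)
    (h.mono hpos hmono (min_le_left _ _)) hpos zero_le_one (by positivity) hΛ x

end ReverseCarleson

lemma measurable_dyadicSum (v : ℕ × ℕ → ℝ) (β : ℝ) (Λ : Finset (ℕ × ℕ)) :
    Measurable (dyadicSum v β Λ) :=
  Finset.measurable_sum _ fun _ _ => measurable_const.indicator (measurableSet_dyadicI _ _)

section Weighted

variable {w : ℝ → ℝ}

lemma integrableOn_of_wInt_pos {I : ℕ × ℕ} (h : 0 < wInt w I) :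
    IntegrableOn w (dyadicI I.1 I.2) := by
  by_contra hw
  exact h.ne' (integral_undef hw)

lemma wInt_le_of_mem_ancestors (hw : ∀ x, 0 ≤ w x) (hpos : ∀ I, IsDyadic I → 0 < wInt w I)
    ⦃I J : ℕ × ℕ⦄ (h : I ∈ ancestors J) : wInt w J ≤ wInt w I :=
  setIntegral_mono_set (integrableOn_of_wInt_pos (hpos I h.1)) (.of_forall hw) h.2.eventuallyLE

lemma integrableOn_unit (hpos : ∀ I, IsDyadic I → 0 < wInt w I) : IntegrableOn w (Ico 0 1) := by
  simpa [dyadicI] using integrableOn_of_wInt_pos (hpos (0, 0) Nat.one_pos)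

lemma dyadicSum_one_mul_eq (Λ : Finset (ℕ × ℕ)) :
    (fun x => dyadicSum (wInt w) 1 Λ x * w x)
      = fun x => ∑ I ∈ Λ, (wInt w I)⁻¹ * (dyadicI I.1 I.2).indicator w x := by
  ext x
  rw [dyadicSum, Finset.sum_mul]
  refine Finset.sum_congr rfl fun I _ => ?_
  rw [Real.rpow_neg_one]
  by_cases hx : x ∈ dyadicI I.1 I.2 <;> simp [hx]

lemma integrableOn_dyadicSum_one_mul (hpos : ∀ I, IsDyadic I → 0 < wInt w I)
    (Λ : Finset (ℕ × ℕ)) :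
    IntegrableOn (fun x => dyadicSum (wInt w) 1 Λ x * w x) (Ico 0 1) := by
  rw [dyadicSum_one_mul_eq]
  exact integrable_finsetSum Λ fun I _ =>
    ((integrableOn_unit hpos).indicator (measurableSet_dyadicI _ _)).const_mul _

lemma integral_dyadicSum_one_mul (hpos : ∀ I, IsDyadic I → 0 < wInt w I)
    {Λ : Finset (ℕ × ℕ)} (hΛ : ∀ I ∈ Λ, IsDyadic I) :
    ∫ x in Ico 0 1, dyadicSum (wInt w) 1 Λ x * w x = Λ.card := by
  rw [dyadicSum_one_mul_eq, integral_finsetSum Λ fun I _ =>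
    ((integrableOn_unit hpos).indicator (measurableSet_dyadicI _ _)).const_mul _]
  rw [Finset.card_eq_sum_ones, Nat.cast_sum, Nat.cast_one]
  refine Finset.sum_congr rfl fun I hI => ?_
  rw [integral_const_mul, setIntegral_indicator (measurableSet_dyadicI _ _),
    inter_eq_self_of_subset_right (dyadicI_subset_unit (hΛ I hI))]
  exact inv_mul_cancel₀ (hpos I (hΛ I hI)).ne'

lemma dyadicSum_rpow_mul_le {p C : ℝ} (hw : ∀ x, 0 ≤ w x)
    (hpos : ∀ I, IsDyadic I → 0 < wInt w I) (h : ReverseCarleson (wInt w) (min 1 (2 / p)) C)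
    (hp : 0 < p) {Λ : Finset (ℕ × ℕ)} (hΛ : ∀ I ∈ Λ, IsDyadic I) (x : ℝ) :
    dyadicSum (wInt w) (2 / p) Λ x ^ (p / 2) * w x
      ≤ C ^ (p / 2) * (dyadicSum (wInt w) 1 Λ x * w x) := by
  rw [← mul_assoc]
  exact mul_le_mul_of_nonneg_right
    (dyadicSum_rpow_le h hpos (wInt_le_of_mem_ancestors hw hpos) hp hΛ x) (hw x)

lemma integral_dyadicSum_rpow_mul_nonneg (hw : ∀ x, 0 ≤ w x)
    (hpos : ∀ I, IsDyadic I → 0 < wInt w I) {Λ : Finset (ℕ × ℕ)} (hΛ : ∀ I ∈ Λ, IsDyadic I)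
    (β r : ℝ) : 0 ≤ ∫ x in Ico 0 1, dyadicSum (wInt w) β Λ x ^ r * w x :=
  integral_nonneg fun x => mul_nonneg (Real.rpow_nonneg (dyadicSum_nonneg hpos β hΛ x) r) (hw x)

lemma integral_dyadicSum_rpow_mul_le {p C : ℝ} (hw : ∀ x, 0 ≤ w x)
    (hpos : ∀ I, IsDyadic I → 0 < wInt w I) (h : ReverseCarleson (wInt w) (min 1 (2 / p)) C)
    (hp : 0 < p) {Λ : Finset (ℕ × ℕ)} (hΛ : ∀ I ∈ Λ, IsDyadic I) :
    ∫ x in Ico 0 1, dyadicSum (wInt w) (2 / p) Λ x ^ (p / 2) * w x ≤ C ^ (p / 2) * Λ.card := by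
  rw [← integral_dyadicSum_one_mul hpos hΛ, ← integral_const_mul]
  refine integral_mono_of_nonneg (.of_forall fun x => ?_)
    ((integrableOn_dyadicSum_one_mul hpos Λ).const_mul _)
    (.of_forall (dyadicSum_rpow_mul_le hw hpos h hp hΛ))
  exact mul_nonneg (Real.rpow_nonneg (dyadicSum_nonneg hpos _ hΛ x) _) (hw x)

lemma card_le_integral_dyadicSum_rpow_mul {p C : ℝ} (hw : ∀ x, 0 ≤ w x)
    (hpos : ∀ I, IsDyadic I → 0 < wInt w I) (h : ReverseCarleson (wInt w) (min 1 (2 / p)) C)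
    (hp : 0 < p) {Λ : Finset (ℕ × ℕ)} (hΛ : ∀ I ∈ Λ, IsDyadic I) :
    (Λ.card : ℝ) ≤ C * ∫ x in Ico 0 1, dyadicSum (wInt w) (2 / p) Λ x ^ (p / 2) * w x := by
  have hint : IntegrableOn (fun x => dyadicSum (wInt w) (2 / p) Λ x ^ (p / 2) * w x) (Ico 0 1) := by
    refine ((integrableOn_dyadicSum_one_mul hpos Λ).const_mul (C ^ (p / 2))).mono' ?_
      (.of_forall fun x => ?_)
    · exact ((measurable_dyadicSum _ _ _).pow_const _).aestronglyMeasurable.mul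
        (integrableOn_unit hpos).aestronglyMeasurable
    · rw [Real.norm_of_nonneg (mul_nonneg (Real.rpow_nonneg (dyadicSum_nonneg hpos _ hΛ x) _)
        (hw x))]
      exact dyadicSum_rpow_mul_le hw hpos h hp hΛ x
  rw [← integral_dyadicSum_one_mul hpos hΛ, ← integral_const_mul]
  refine integral_mono_of_nonneg
    (.of_forall fun x => mul_nonneg (dyadicSum_nonneg hpos _ hΛ x) (hw x)) (hint.const_mul _)
    (.of_forall fun x => ?_)
  dsimp only
  rw [← mul_assoc]
  exact mul_le_mul_of_nonneg_right
    (dyadicSum_one_le h hpos (wInt_le_of_mem_ancestors hw hpos) hp hΛ x) (hw x)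

end Weighted

theorem stmt18_general (w : ℝ → ℝ) (p C : ℝ) (hp : 1 < p)
    (hw : ∀ x, 0 ≤ w x) (hpos : ∀ I, IsDyadic I → 0 < wInt w I)
    -- dyadic reverse Carleson condition of order `min{1, 2/p}` with constant `C`
    (hDRCC : ∀ J, IsDyadic J →
      ∑' I : ancestors J, (wInt w I.1) ^ (-(min 1 (2 / p)))
        ≤ C * (wInt w J) ^ (-(min 1 (2 / p))))
    (Λ₁ Λ₂ : Finset (ℕ × ℕ)) (h1 : ∀ I ∈ Λ₁, IsDyadic I) (h2 : ∀ I ∈ Λ₂, IsDyadic I)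
    (hcard : Λ₁.card ≤ Λ₂.card) :
    XnormOne w p Λ₁ ≤ C ^ 2 * XnormOne w p Λ₂ := by
  have hp0 : 0 < p := by linarith
  have hC : 1 ≤ C := ReverseCarleson.one_le hDRCC hpos
  set A₁ := ∫ x in Ico 0 1, dyadicSum (wInt w) (2 / p) Λ₁ x ^ (p / 2) * w x
  set A₂ := ∫ x in Ico 0 1, dyadicSum (wInt w) (2 / p) Λ₂ x ^ (p / 2) * w x
  have hA₂ : 0 ≤ A₂ := integral_dyadicSum_rpow_mul_nonneg hw hpos h2 _ _
  have hA : A₁ ≤ C ^ (p / 2 + 1) * A₂ := calc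
    A₁ ≤ C ^ (p / 2) * Λ₁.card := integral_dyadicSum_rpow_mul_le hw hpos hDRCC hp0 h1
    _ ≤ C ^ (p / 2) * (C * A₂) := by
        gcongr
        exact (Nat.cast_le.2 hcard).trans (card_le_integral_dyadicSum_rpow_mul hw hpos hDRCC hp0 h2)
    _ = C ^ (p / 2 + 1) * A₂ := by rw [Real.rpow_add_one (by positivity)]; ring
  calc XnormOne w p Λ₁ = A₁ ^ (1 / p) := rfl
    _ ≤ (C ^ (p / 2 + 1) * A₂) ^ (1 / p) := by
        gcongr
        exact integral_dyadicSum_rpow_mul_nonneg hw hpos h1 _ _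
    _ = C ^ ((p / 2 + 1) / p) * XnormOne w p Λ₂ := by
        rw [Real.mul_rpow (by positivity) hA₂, ← Real.rpow_mul (by positivity), mul_one_div]
        rfl
    _ ≤ C ^ (2 : ℝ) * XnormOne w p Λ₂ := by
        refine mul_le_mul_of_nonneg_right (Real.rpow_le_rpow_of_exponent_le hC ?_)
          (Real.rpow_nonneg hA₂ _)
        rw [div_le_iff₀ hp0]
        linarith
    _ = C ^ 2 * XnormOne w p Λ₂ := by rw [Real.rpow_two]

theorem stmt18 (w : ℝ → ℝ) (p C : ℝ) (hp : 1 < p) (hC : 0 < C)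
    (hw : ∀ x, 0 ≤ w x) (hpos : ∀ I, IsDyadic I → 0 < wInt w I)
    -- dyadic reverse Carleson condition of order `min{1, 2/p}` with constant `C`
    (hDRCC : ∀ J, IsDyadic J →
      ∑' I : ancestors J, (wInt w I.1) ^ (-(min 1 (2 / p)))
        ≤ C * (wInt w J) ^ (-(min 1 (2 / p))))
    (Λ₁ Λ₂ : Finset (ℕ × ℕ)) (h1 : ∀ I ∈ Λ₁, IsDyadic I) (h2 : ∀ I ∈ Λ₂, IsDyadic I)
    (hcard : Λ₁.card ≤ Λ₂.card) :
    XnormOne w p Λ₁ ≤ C ^ 2 * XnormOne w p Λ₂ :=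
  stmt18_general w p C hp hw hpos hDRCC Λ₁ Λ₂ h1 h2 hcard
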